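/- arXiv:2304.00124 — 5 statements merged into one kernel-verified Lean document; each statement's English description precedes it below -/
import Mathlib

section
/- For every r < 0 there exists a constant C > 0 (depending only on r) such that for all measurable functions F, G : [0,∞) → ℂ, one has ∫_0^∞ (ξ+1)^{2(2r-1)} | ∫_0^ξ F(ξ-η) G(η) dη |² dξ ≤ C (∫_0^∞ (ξ+1)^{2r} |F(ξ)|² dξ) (∫_0^∞ (ξ+1)^{2r} |G(ξ)|² dξ). (This is the Fourier-side form of the statement that the product of two functions in the Hardy–Sobolev space H^r_+(ℝ) lies in H^{2r-1}(ℝ) with the corresponding norm bound.) -/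
open MeasureTheory Set
open scoped ENNReal

/-!
With the weight `w(x) = (x+1)^r`, Cauchy–Schwarz for the weight `w(ξ-η) w(η)` bounds
`|∫_0^ξ F(ξ-η) G(η) dη|²` by `∫_0^ξ w(ξ-η)²|F(ξ-η)|² w(η)²|G(η)|² dη` times
`∫_0^ξ w(ξ-η)⁻² w(η)⁻² dη ≤ ξ (ξ+1)^(-4r)`, where `r ≤ 0` makes `w⁻¹` increasing.
Since `(ξ+1)^(2(2r-1)) ξ (ξ+1)^(-4r) = ξ/(ξ+1)² ≤ 1`, what remains is the convolution of the
two weighted densities, whose integral over `ξ` is the product of their integrals by Tonelli;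
so `C = 1` works.
-/

theorem MeasureTheory.lintegral_lconvolution {G : Type*} [MeasurableSpace G] [AddGroup G]
    [MeasurableAdd₂ G] [MeasurableNeg G] {μ : Measure G} [μ.IsAddLeftInvariant] [SFinite μ]
    {f g : G → ℝ≥0∞} (hf : Measurable f) (hg : Measurable g) :
    ∫⁻ x, (f ⋆ₗ[μ] g) x ∂μ = (∫⁻ x, f x ∂μ) * ∫⁻ x, g x ∂μ := by
  simp only [lconvolution_def]
  rw [lintegral_lintegral_swap (by fun_prop)]
  calc ∫⁻ y, ∫⁻ x, f y * g (-y + x) ∂μ ∂μ = ∫⁻ y, f y * ∫⁻ x, g x ∂μ ∂μ := by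
        refine lintegral_congr fun y => ?_
        rw [lintegral_const_mul _ (by fun_prop), lintegral_add_left_eq_self]
    _ = (∫⁻ x, f x ∂μ) * ∫⁻ x, g x ∂μ := lintegral_mul_const _ hf

theorem setLIntegral_Ioc_mul_sub_le_lconvolution (f g : ℝ → ℝ≥0∞) (ξ : ℝ) :
    ∫⁻ η in Ioc 0 ξ, f (ξ - η) * g η ≤ ((Ici 0).indicator g ⋆ₗ (Ici 0).indicator f) ξ := by
  rw [lconvolution_def]
  calc ∫⁻ η in Ioc 0 ξ, f (ξ - η) * g η
      = ∫⁻ η in Ioc 0 ξ, (Ici 0).indicator g η * (Ici 0).indicator f (-η + ξ) := by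
        refine setLIntegral_congr_fun measurableSet_Ioc fun η ⟨hη₀, hηξ⟩ => ?_
        rw [indicator_of_mem (show η ∈ Ici 0 from hη₀.le),
          indicator_of_mem (show -η + ξ ∈ Ici 0 by simp only [mem_Ici]; linarith), neg_add_eq_sub,
          mul_comm]
    _ ≤ _ := setLIntegral_le_lintegral _ _

theorem ENNReal.lintegral_mul_sq_le {α : Type*} [MeasurableSpace α] {μ : Measure α}
    {f g : α → ℝ≥0∞} (hf : AEMeasurable f μ) (hg : AEMeasurable g μ) :
    (∫⁻ a, f a * g a ∂μ) ^ 2 ≤ (∫⁻ a, f a ^ 2 ∂μ) * ∫⁻ a, g a ^ 2 ∂μ := by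
  have h := ENNReal.lintegral_mul_le_Lp_mul_Lq μ Real.HolderConjugate.two_two hf hg
  simp only [Pi.mul_apply, ENNReal.rpow_two] at h
  calc (∫⁻ a, f a * g a ∂μ) ^ 2
      ≤ ((∫⁻ a, f a ^ 2 ∂μ) ^ (1 / 2 : ℝ) * (∫⁻ a, g a ^ 2 ∂μ) ^ (1 / 2 : ℝ)) ^ 2 := by gcongr
    _ = (∫⁻ a, f a ^ 2 ∂μ) * ∫⁻ a, g a ^ 2 ∂μ := by
      rw [mul_pow, ← ENNReal.rpow_natCast, ← ENNReal.rpow_natCast, ← ENNReal.rpow_mul,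
        ← ENNReal.rpow_mul]
      norm_num

theorem ENNReal.lintegral_sq_le_of_weight {α : Type*} [MeasurableSpace α] {μ : Measure α}
    {f w : α → ℝ≥0∞} (hf : AEMeasurable f μ) (hw : AEMeasurable w μ)
    (hw₀ : ∀ᵐ a ∂μ, w a ≠ 0) (hw_top : ∀ᵐ a ∂μ, w a ≠ ∞) :
    (∫⁻ a, f a ∂μ) ^ 2 ≤ (∫⁻ a, (f a * w a) ^ 2 ∂μ) * ∫⁻ a, (w a)⁻¹ ^ 2 ∂μ := by
  calc (∫⁻ a, f a ∂μ) ^ 2 = (∫⁻ a, f a * w a * (w a)⁻¹ ∂μ) ^ 2 := by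
        congr 1
        refine lintegral_congr_ae ?_
        filter_upwards [hw₀, hw_top] with a h₀ h_top
        rw [mul_assoc, ENNReal.mul_inv_cancel h₀ h_top, mul_one]
    _ ≤ _ := ENNReal.lintegral_mul_sq_le (hf.mul hw) hw.inv

theorem ENNReal.ofReal_rpow_two_mul_mul_norm_sq {E : Type*} [NormedAddCommGroup E] {x : ℝ}
    (hx : 0 ≤ x) (r : ℝ) (z : E) :
    ENNReal.ofReal (x ^ (2 * r) * ‖z‖ ^ 2) = (ENNReal.ofReal (x ^ r) * ‖z‖ₑ) ^ 2 := by
  rw [mul_pow, ← ofReal_norm, ← ENNReal.ofReal_pow (by positivity),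
    ← ENNReal.ofReal_pow (norm_nonneg _), ← ENNReal.ofReal_mul (by positivity), mul_comm 2 r,
    ← Real.rpow_mul_natCast hx, Nat.cast_ofNat]

theorem ENNReal.inv_ofReal_add_one_rpow_le {r u ξ : ℝ} (hr : r ≤ 0) (hu : 0 ≤ u) (huξ : u ≤ ξ) :
    (ENNReal.ofReal ((u + 1) ^ r))⁻¹ ≤ ENNReal.ofReal ((ξ + 1) ^ (-r)) := by
  rw [← ENNReal.ofReal_inv_of_pos (by positivity), ← Real.rpow_neg (by positivity)]
  exact ENNReal.ofReal_le_ofReal (Real.rpow_le_rpow (by positivity) (by linarith) (by linarith))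

theorem setLIntegral_Ioc_inv_weight_sq_le {r : ℝ} (hr : r ≤ 0) (ξ : ℝ) :
    ∫⁻ η in Ioc 0 ξ, (ENNReal.ofReal ((ξ - η + 1) ^ r) * ENNReal.ofReal ((η + 1) ^ r))⁻¹ ^ 2
      ≤ ENNReal.ofReal ((ξ + 1) ^ (-r)) ^ 4 * ENNReal.ofReal ξ := by
  calc ∫⁻ η in Ioc 0 ξ, (ENNReal.ofReal ((ξ - η + 1) ^ r) * ENNReal.ofReal ((η + 1) ^ r))⁻¹ ^ 2
      ≤ ∫⁻ η in Ioc 0 ξ, ENNReal.ofReal ((ξ + 1) ^ (-r)) ^ 4 := by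
        refine setLIntegral_mono' measurableSet_Ioc fun η ⟨hη₀, hηξ⟩ => ?_
        rw [ENNReal.mul_inv (Or.inr ENNReal.ofReal_ne_top) (Or.inl ENNReal.ofReal_ne_top)]
        calc ((ENNReal.ofReal ((ξ - η + 1) ^ r))⁻¹ * (ENNReal.ofReal ((η + 1) ^ r))⁻¹) ^ 2
            ≤ (ENNReal.ofReal ((ξ + 1) ^ (-r)) * ENNReal.ofReal ((ξ + 1) ^ (-r))) ^ 2 := by
              gcongr
              · exact ENNReal.inv_ofReal_add_one_rpow_le hr (by linarith) (by linarith)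
              · exact ENNReal.inv_ofReal_add_one_rpow_le hr hη₀.le hηξ
          _ = _ := by ring
    _ = ENNReal.ofReal ((ξ + 1) ^ (-r)) ^ 4 * ENNReal.ofReal ξ := by
        rw [setLIntegral_const, Real.volume_Ioc, sub_zero]

theorem ofReal_add_one_rpow_mul_le_one (r : ℝ) {ξ : ℝ} (hξ : 0 ≤ ξ) :
    ENNReal.ofReal ((ξ + 1) ^ (2 * (2 * r - 1))) * ENNReal.ofReal ((ξ + 1) ^ (-r)) ^ 4 *
      ENNReal.ofReal ξ ≤ 1 := by
  have hξ1 : 0 < ξ + 1 := by linarith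
  rw [← ENNReal.ofReal_pow (by positivity), ← ENNReal.ofReal_mul (by positivity),
    ← ENNReal.ofReal_mul (by positivity), ← Real.rpow_mul_natCast hξ1.le, ← Real.rpow_add hξ1,
    show 2 * (2 * r - 1) + -r * (4 : ℕ) = -(2 : ℕ) by push_cast; ring,
    Real.rpow_neg hξ1.le, Real.rpow_natCast, ENNReal.ofReal_le_one, inv_mul_le_iff₀ (by positivity),
    mul_one]
  nlinarith

theorem weighted_norm_intervalIntegral_sub_mul_sq_le {r ξ : ℝ} (hr : r ≤ 0) (hξ : 0 < ξ)
    {F G : ℝ → ℂ} (hF : Measurable F) (hG : Measurable G) :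
    ENNReal.ofReal ((ξ + 1) ^ (2 * (2 * r - 1)) * ‖∫ η in (0 : ℝ)..ξ, F (ξ - η) * G η‖ ^ 2) ≤
      ∫⁻ η in Ioc 0 ξ, ENNReal.ofReal ((ξ - η + 1) ^ (2 * r) * ‖F (ξ - η)‖ ^ 2) *
        ENNReal.ofReal ((η + 1) ^ (2 * r) * ‖G η‖ ^ 2) := by
  set W : ℝ → ℝ≥0∞ := fun u => ENNReal.ofReal ((u + 1) ^ r)
  set I := ∫⁻ η in Ioc 0 ξ, ENNReal.ofReal ((ξ - η + 1) ^ (2 * r) * ‖F (ξ - η)‖ ^ 2) *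
        ENNReal.ofReal ((η + 1) ^ (2 * r) * ‖G η‖ ^ 2)
  have hW : ∀ η ∈ Ioc 0 ξ, W (ξ - η) * W η ≠ 0 ∧ W (ξ - η) * W η ≠ ∞ := by
    rintro η ⟨hη₀, hηξ⟩
    refine ⟨mul_ne_zero ?_ ?_, ENNReal.mul_ne_top ENNReal.ofReal_ne_top ENNReal.ofReal_ne_top⟩ <;>
      exact (ENNReal.ofReal_pos.2 (Real.rpow_pos_of_pos (by linarith) r)).ne'
  have cauchy_schwarz : (∫⁻ η in Ioc 0 ξ, ‖F (ξ - η)‖ₑ * ‖G η‖ₑ) ^ 2 ≤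
      I * (ENNReal.ofReal ((ξ + 1) ^ (-r)) ^ 4 * ENNReal.ofReal ξ) := by
    refine (ENNReal.lintegral_sq_le_of_weight (w := fun η => W (ξ - η) * W η) (by fun_prop)
      (by fun_prop) ?_ ?_).trans (mul_le_mul' (le_of_eq ?_) ?_)
    · exact (ae_restrict_iff' measurableSet_Ioc).2 (ae_of_all _ fun η hη => (hW η hη).1)
    · exact (ae_restrict_iff' measurableSet_Ioc).2 (ae_of_all _ fun η hη => (hW η hη).2)
    · refine setLIntegral_congr_fun measurableSet_Ioc fun η ⟨hη₀, hηξ⟩ => ?_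
      rw [ENNReal.ofReal_rpow_two_mul_mul_norm_sq (by linarith),
        ENNReal.ofReal_rpow_two_mul_mul_norm_sq (by linarith)]
      ring
    · exact setLIntegral_Ioc_inv_weight_sq_le hr ξ
  calc ENNReal.ofReal ((ξ + 1) ^ (2 * (2 * r - 1)) * ‖∫ η in (0 : ℝ)..ξ, F (ξ - η) * G η‖ ^ 2)
      = ENNReal.ofReal ((ξ + 1) ^ (2 * (2 * r - 1))) *
          ‖∫ η in (0 : ℝ)..ξ, F (ξ - η) * G η‖ₑ ^ 2 := by
        rw [ENNReal.ofReal_mul (by positivity), ENNReal.ofReal_pow (norm_nonneg _), ofReal_norm]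
    _ ≤ ENNReal.ofReal ((ξ + 1) ^ (2 * (2 * r - 1))) *
          (∫⁻ η in Ioc 0 ξ, ‖F (ξ - η)‖ₑ * ‖G η‖ₑ) ^ 2 := by
        gcongr
        rw [intervalIntegral.integral_of_le hξ.le]
        simpa only [enorm_mul] using enorm_integral_le_lintegral_enorm fun η => F (ξ - η) * G η
    _ ≤ ENNReal.ofReal ((ξ + 1) ^ (2 * (2 * r - 1))) *
          (I * (ENNReal.ofReal ((ξ + 1) ^ (-r)) ^ 4 * ENNReal.ofReal ξ)) := by gcongr
    _ = (ENNReal.ofReal ((ξ + 1) ^ (2 * (2 * r - 1))) * ENNReal.ofReal ((ξ + 1) ^ (-r)) ^ 4 *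
          ENNReal.ofReal ξ) * I := by ring
    _ ≤ I := mul_le_of_le_one_left' (ofReal_add_one_rpow_mul_le_one r hξ.le)

/-- For every `r < 0` there is a constant `C > 0` such that for all
measurable `F G : [0,∞) → ℂ` (extended to `ℝ`), the Fourier-side product estimate
`‖fg‖_{H^{2r-1}} ≲ ‖f‖_{H^r} ‖g‖_{H^r}` for Hardy–Sobolev functions holds, i.e.
`∫_0^∞ (ξ+1)^{2(2r-1)} |∫_0^ξ F(ξ-η)G(η) dη|² dξ
  ≤ C (∫_0^∞ (ξ+1)^{2r}|F|²)(∫_0^∞ (ξ+1)^{2r}|G|²)`. -/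
theorem stmt1 (r : ℝ) (hr : r < 0) :
    ∃ C : ℝ, 0 < C ∧
      ∀ F G : ℝ → ℂ, Measurable F → Measurable G →
        (∫⁻ ξ in Ioi (0 : ℝ),
            ENNReal.ofReal ((ξ + 1) ^ (2 * (2 * r - 1)) *
              ‖∫ η in (0 : ℝ)..ξ, F (ξ - η) * G η‖ ^ 2))
          ≤ ENNReal.ofReal C *
              (∫⁻ ξ in Ioi (0 : ℝ), ENNReal.ofReal ((ξ + 1) ^ (2 * r) * ‖F ξ‖ ^ 2)) *
              (∫⁻ ξ in Ioi (0 : ℝ), ENNReal.ofReal ((ξ + 1) ^ (2 * r) * ‖G ξ‖ ^ 2)) := by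
  refine ⟨1, one_pos, fun F G hF hG => ?_⟩
  set A : ℝ → ℝ≥0∞ := fun u => ENNReal.ofReal ((u + 1) ^ (2 * r) * ‖F u‖ ^ 2)
  set B : ℝ → ℝ≥0∞ := fun u => ENNReal.ofReal ((u + 1) ^ (2 * r) * ‖G u‖ ^ 2)
  calc _ ≤ ∫⁻ ξ in Ioi 0, ((Ici 0).indicator B ⋆ₗ (Ici 0).indicator A) ξ :=
        setLIntegral_mono' measurableSet_Ioi fun ξ hξ =>
          (weighted_norm_intervalIntegral_sub_mul_sq_le hr.le hξ hF hG).trans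
            (setLIntegral_Ioc_mul_sub_le_lconvolution A B ξ)
    _ ≤ ∫⁻ ξ, ((Ici 0).indicator B ⋆ₗ (Ici 0).indicator A) ξ := setLIntegral_le_lintegral _ _
    _ = (∫⁻ ξ, (Ici 0).indicator B ξ) * ∫⁻ ξ, (Ici 0).indicator A ξ :=
        lintegral_lconvolution ((by fun_prop : Measurable B).indicator measurableSet_Ici)
          ((by fun_prop : Measurable A).indicator measurableSet_Ici)
    _ = _ := by
        rw [lintegral_indicator measurableSet_Ici, lintegral_indicator measurableSet_Ici,
          Measure.restrict_congr_set Ioi_ae_eq_Ici, ENNReal.ofReal_one, one_mul, mul_comm]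
end

section
/- Fix s ∈ (−1/2, 0) and set ε = (1/2 + s)/2, so ε ∈ (0, 1/4). There exists a constant C > 0 (depending only on s) such that for all κ ≥ 1 and all measurable functions Q : ℝ → ℂ and F : [0,∞) → ℂ, one has ∫_0^∞ (ξ+1)^{2s} | ∫_0^∞ Q(ξ-η) F(η)/(η+κ) dη |² dξ ≤ C κ^{-4ε} (∫_ℝ (|ξ|+1)^{2s} |Q(ξ)|² dξ) (∫_0^∞ (ξ+κ)^{2s} |F(ξ)|² dξ). (This is the Fourier-side form of the estimate ‖C₊ q R₀(κ) C₊ f‖_{H^s} ≲ κ^{-2ε} ‖q‖_{H^s} ‖f₊‖_{H^s_κ}, where R₀(κ) is the free resolvent (−i∂ + κ)^{-1} on the Hardy space.) -/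
/-!
Cauchy–Schwarz in `η` with the weights `(η+κ)^(-1-s)` and `(η+κ)^s` bounds the inner integral
by the `H^s_κ`-norm of `F` times `∫ |Q(ξ-η)|² (η+κ)^(-2-2s) dη`. After Tonelli and `ζ = ξ - η` it
remains to bound the kernel `K(ζ) = ∫_{η>0, ζ+η>0} (ζ+η+1)^(2s) (η+κ)^(-2-2s) dη` by
`C κ^(-1-2s) (|ζ|+1)^(2s)`. Substituting `η = u + ζ⁻`, the inequality
`(u+ζ⁺+1)(u+ζ⁻+κ) ≥ (|ζ|+1) u` bounds the integrand by `(|ζ|+1)^(2s) u^(2s) (u+κ)^(-2-4s)`, whose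
integral over `u > 0` is at most `2 κ^(-1-2s) / (1+2s)`: split at `u = κ`.
-/

open MeasureTheory Set

theorem enorm_integral_mul_sq_le {α E : Type*} [MeasurableSpace α] {μ : Measure α}
    [NormedRing E] [NormedSpace ℝ E] {f g : α → E}
    (hf : AEStronglyMeasurable f μ) (hg : AEStronglyMeasurable g μ) :
    ‖∫ x, f x * g x ∂μ‖ₑ ^ 2 ≤ (∫⁻ x, ‖f x‖ₑ ^ 2 ∂μ) * ∫⁻ x, ‖g x‖ₑ ^ 2 ∂μ := by
  have holder :=
    ENNReal.lintegral_mul_le_Lp_mul_Lq μ Real.HolderConjugate.two_two hf.enorm hg.enorm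
  simp only [Pi.mul_apply, ENNReal.rpow_two] at holder
  calc ‖∫ x, f x * g x ∂μ‖ₑ ^ 2 ≤ (∫⁻ x, ‖f x‖ₑ * ‖g x‖ₑ ∂μ) ^ 2 := by
        gcongr
        exact (enorm_integral_le_lintegral_enorm _).trans (lintegral_mono fun x => by
          simpa only [enorm_eq_nnnorm, ← ENNReal.coe_mul] using
            ENNReal.coe_le_coe.2 (nnnorm_mul_le _ _))
    _ ≤ _ := by
        grw [holder]
        rw [mul_pow, ← ENNReal.rpow_natCast, ← ENNReal.rpow_natCast, ← ENNReal.rpow_mul,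
          ← ENNReal.rpow_mul]
        norm_num

theorem rpow_div_two_sq {x : ℝ} (hx : 0 ≤ x) (p : ℝ) : (x ^ (p / 2)) ^ 2 = x ^ p := by
  rw [← Real.rpow_natCast, ← Real.rpow_mul hx]; norm_num

theorem ofReal_sq_norm_setIntegral_Ioi_div_le {p κ : ℝ} (hκ : 0 < κ) {G F : ℝ → ℂ}
    (hG : Measurable G) (hF : Measurable F) :
    ENNReal.ofReal (‖∫ η in Ioi (0 : ℝ), G η * F η / ((η + κ : ℝ) : ℂ)‖ ^ 2) ≤
      (∫⁻ η in Ioi (0 : ℝ), ENNReal.ofReal (‖G η‖ ^ 2 * (η + κ) ^ (-2 - p))) *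
        ∫⁻ η in Ioi (0 : ℝ), ENNReal.ofReal ((η + κ) ^ p * ‖F η‖ ^ 2) := by
  have hpos : ∀ η ∈ Ioi (0 : ℝ), 0 < η + κ := fun η hη => by linarith [mem_Ioi.mp hη]
  have hsplit : ∀ η ∈ Ioi (0 : ℝ), G η * F η / ((η + κ : ℝ) : ℂ) =
      (G η * (((η + κ) ^ ((-2 - p) / 2) : ℝ) : ℂ)) * ((((η + κ) ^ (p / 2) : ℝ) : ℂ) * F η) := by
    intro η hη
    have h : (η + κ) ^ ((-2 - p) / 2) * (η + κ) ^ (p / 2) = (η + κ)⁻¹ := by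
      rw [← Real.rpow_add (hpos η hη), ← Real.rpow_neg_one]; ring_nf
    rw [div_eq_mul_inv, ← Complex.ofReal_inv, ← h, Complex.ofReal_mul]; ring
  rw [setIntegral_congr_fun measurableSet_Ioi hsplit, ENNReal.ofReal_pow (norm_nonneg _),
    ofReal_norm]
  grw [enorm_integral_mul_sq_le (by fun_prop) (by fun_prop)]
  refine mul_le_mul' (setLIntegral_congr_fun measurableSet_Ioi fun η hη => ?_).le
    (setLIntegral_congr_fun measurableSet_Ioi fun η hη => ?_).le
  all_goals
    rw [← ofReal_norm, ← ENNReal.ofReal_pow (norm_nonneg _), norm_mul, mul_pow, Complex.norm_real,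
      Real.norm_of_nonneg (Real.rpow_nonneg (hpos η hη).le _), rpow_div_two_sq (hpos η hη).le]

theorem lintegral_mul_lintegral_sub_mul {G : Type*} [AddGroup G] [MeasurableSpace G]
    [MeasurableAdd₂ G] [MeasurableNeg G] {μ : Measure G} [SFinite μ] [μ.IsAddRightInvariant]
    {a b c : G → ENNReal} (ha : Measurable a) (hb : Measurable b) (hc : Measurable c) :
    ∫⁻ x, a x * ∫⁻ y, b (x - y) * c y ∂μ ∂μ = ∫⁻ z, b z * ∫⁻ y, a (z + y) * c y ∂μ ∂μ := by
  calc ∫⁻ x, a x * ∫⁻ y, b (x - y) * c y ∂μ ∂μ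
      = ∫⁻ x, ∫⁻ y, a x * b (x - y) * c y ∂μ ∂μ := lintegral_congr fun x => by
        rw [← lintegral_const_mul _ (by fun_prop)]
        simp_rw [mul_assoc]
    _ = ∫⁻ y, ∫⁻ x, a x * b (x - y) * c y ∂μ ∂μ := lintegral_lintegral_swap (by fun_prop)
    _ = ∫⁻ y, ∫⁻ z, b z * (a (z + y) * c y) ∂μ ∂μ := lintegral_congr fun y => by
        rw [← lintegral_add_right_eq_self _ y]
        simp only [add_sub_cancel_right]
        exact lintegral_congr fun z => by ring
    _ = ∫⁻ z, b z * ∫⁻ y, a (z + y) * c y ∂μ ∂μ := by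
        rw [lintegral_lintegral_swap (by fun_prop)]
        exact lintegral_congr fun z => by rw [lintegral_const_mul _ (by fun_prop)]

theorem rpow_mul_rpow_le_rpow_mul {p u a b κ : ℝ} (hp : -1 ≤ p) (hp0 : p ≤ 0) (hu : 0 < u)
    (ha : 0 ≤ a) (hb : 0 ≤ b) (hκ : 0 < κ) :
    (u + a + 1) ^ p * (u + b + κ) ^ (-2 - p) ≤
      (a + b + 1) ^ p * (u ^ p * (u + κ) ^ (-2 - 2 * p)) := by
  have hfactor : (u + a + 1) * (u + b + κ) ≥ (a + b + 1) * u := by nlinarith [mul_nonneg ha hb]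
  have hsplit : (u + b + κ) ^ (-2 - p) = (u + b + κ) ^ p * (u + b + κ) ^ (-2 - 2 * p) := by
    rw [← Real.rpow_add (by linarith)]; ring_nf
  calc (u + a + 1) ^ p * (u + b + κ) ^ (-2 - p)
      = ((u + a + 1) * (u + b + κ)) ^ p * (u + b + κ) ^ (-2 - 2 * p) := by
        rw [hsplit, Real.mul_rpow (by linarith) (by linarith)]; ring
    _ ≤ ((a + b + 1) * u) ^ p * (u + κ) ^ (-2 - 2 * p) := by
        refine mul_le_mul (Real.rpow_le_rpow_of_nonpos (by positivity) hfactor hp0)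
          (Real.rpow_le_rpow_of_nonpos (by positivity) (by linarith) (by linarith))
          (Real.rpow_nonneg (by positivity) _) (Real.rpow_nonneg (by positivity) _)
    _ = (a + b + 1) ^ p * (u ^ p * (u + κ) ^ (-2 - 2 * p)) := by
        rw [Real.mul_rpow (by positivity) hu.le]; ring

theorem lintegral_Ioc_rpow_mul_rpow_le {p κ : ℝ} (hp : -1 < p) (hκ : 0 < κ) :
    ∫⁻ u in Ioc 0 κ, ENNReal.ofReal (u ^ p * (u + κ) ^ (-2 - 2 * p)) ≤
      ENNReal.ofReal (κ ^ (-(p + 1)) / (p + 1)) := by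
  have hint : IntegrableOn (fun u : ℝ => u ^ p * κ ^ (-2 - 2 * p)) (Ioc 0 κ) :=
    ((intervalIntegral.intervalIntegrable_rpow' hp).mul_const _).1
  calc ∫⁻ u in Ioc 0 κ, ENNReal.ofReal (u ^ p * (u + κ) ^ (-2 - 2 * p))
      ≤ ∫⁻ u in Ioc 0 κ, ENNReal.ofReal (u ^ p * κ ^ (-2 - 2 * p)) := by
        refine setLIntegral_mono' measurableSet_Ioc fun u hu => ENNReal.ofReal_le_ofReal ?_
        exact mul_le_mul_of_nonneg_left
          (Real.rpow_le_rpow_of_nonpos hκ (by linarith [hu.1]) (by linarith))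
          (Real.rpow_nonneg hu.1.le _)
    _ = ENNReal.ofReal (κ ^ (-(p + 1)) / (p + 1)) := by
        rw [← ofReal_integral_eq_lintegral_ofReal hint
          (ae_restrict_of_forall_mem measurableSet_Ioc fun u hu => by
            have := hu.1; positivity),
          integral_mul_const, ← intervalIntegral.integral_of_le hκ.le, integral_rpow (.inl hp),
          Real.zero_rpow (by linarith), sub_zero, div_mul_eq_mul_div, ← Real.rpow_add hκ]
        ring_nf

theorem lintegral_Ioi_rpow_mul_rpow_le {p κ : ℝ} (hp : -1 < p) (hκ : 0 < κ) :
    ∫⁻ u in Ioi κ, ENNReal.ofReal (u ^ p * (u + κ) ^ (-2 - 2 * p)) ≤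
      ENNReal.ofReal (κ ^ (-(p + 1)) / (p + 1)) := by
  calc ∫⁻ u in Ioi κ, ENNReal.ofReal (u ^ p * (u + κ) ^ (-2 - 2 * p))
      ≤ ∫⁻ u in Ioi κ, ENNReal.ofReal (u ^ (-2 - p)) := by
        refine setLIntegral_mono' measurableSet_Ioi fun u hu => ENNReal.ofReal_le_ofReal ?_
        have hu0 : 0 < u := hκ.trans hu
        calc u ^ p * (u + κ) ^ (-2 - 2 * p) ≤ u ^ p * u ^ (-2 - 2 * p) := by
              exact mul_le_mul_of_nonneg_left
                (Real.rpow_le_rpow_of_nonpos hu0 (by linarith) (by linarith))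
                (Real.rpow_nonneg hu0.le _)
          _ = u ^ (-2 - p) := by rw [← Real.rpow_add hu0]; ring_nf
    _ = ENNReal.ofReal (κ ^ (-(p + 1)) / (p + 1)) := by
        rw [← ofReal_integral_eq_lintegral_ofReal (integrableOn_Ioi_rpow_of_lt (by linarith) hκ)
          (ae_restrict_of_forall_mem measurableSet_Ioi fun u hu =>
            Real.rpow_nonneg (hκ.trans hu).le _),
          integral_Ioi_rpow_of_lt (by linarith) hκ, ← neg_div_neg_eq, neg_neg]
        ring_nf

theorem lintegral_Ioi_zero_rpow_mul_rpow_le {p κ : ℝ} (hp : -1 < p) (hκ : 0 < κ) :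
    ∫⁻ u in Ioi 0, ENNReal.ofReal (u ^ p * (u + κ) ^ (-2 - 2 * p)) ≤
      ENNReal.ofReal (2 / (p + 1) * κ ^ (-(p + 1))) := by
  have h : 0 ≤ κ ^ (-(p + 1)) / (p + 1) := div_nonneg (Real.rpow_nonneg hκ.le _) (by linarith)
  rw [← Ioc_union_Ioi_eq_Ioi hκ.le, lintegral_union measurableSet_Ioi (Ioc_disjoint_Ioi le_rfl)]
  grw [lintegral_Ioc_rpow_mul_rpow_le hp hκ, lintegral_Ioi_rpow_mul_rpow_le hp hκ,
    ← ENNReal.ofReal_add h h]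
  exact (congrArg _ (by ring)).le

theorem lintegral_indicator_mul_indicator_le {p κ : ℝ} (hp : -1 < p) (hp0 : p ≤ 0) (hκ : 0 < κ)
    (ζ : ℝ) :
    ∫⁻ η, (Ioi 0).indicator (fun x => ENNReal.ofReal ((x + 1) ^ p)) (ζ + η) *
        (Ioi 0).indicator (fun y => ENNReal.ofReal ((y + κ) ^ (-2 - p))) η ≤
      ENNReal.ofReal ((|ζ| + 1) ^ p) * ENNReal.ofReal (2 / (p + 1) * κ ^ (-(p + 1))) := by
  set k := (Ioi (0 : ℝ)).indicator fun u => ENNReal.ofReal (u ^ p * (u + κ) ^ (-2 - 2 * p))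
    with hk
  have hpointwise : ∀ η, (Ioi 0).indicator (fun x => ENNReal.ofReal ((x + 1) ^ p)) (ζ + η) *
      (Ioi 0).indicator (fun y => ENNReal.ofReal ((y + κ) ^ (-2 - p))) η ≤
      ENNReal.ofReal ((|ζ| + 1) ^ p) * k (η - ζ⁻) := by
    intro η
    by_cases hζη : 0 < ζ + η
    · by_cases hη : 0 < η
      · have hu : 0 < η - ζ⁻ := by
          rw [sub_pos, negPart_def]; exact max_lt (by linarith) hη
        have key := rpow_mul_rpow_le_rpow_mul hp.le hp0 hu (posPart_nonneg ζ) (negPart_nonneg ζ) hκ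
        rw [show η - ζ⁻ + ζ⁺ + 1 = ζ + η + 1 by linear_combination posPart_sub_negPart ζ,
          sub_add_cancel, posPart_add_negPart] at key
        rw [indicator_of_mem (mem_Ioi.2 hζη), indicator_of_mem (mem_Ioi.2 hη), hk,
          indicator_of_mem (mem_Ioi.2 hu), ← ENNReal.ofReal_mul (by positivity),
          ← ENNReal.ofReal_mul (by positivity)]
        exact ENNReal.ofReal_le_ofReal key
      · simp [indicator_of_notMem (show η ∉ Ioi 0 from hη)]
    · simp [indicator_of_notMem (show ζ + η ∉ Ioi 0 from hζη)]
  calc _ ≤ ∫⁻ η, ENNReal.ofReal ((|ζ| + 1) ^ p) * k (η - ζ⁻) := lintegral_mono hpointwise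
    _ = ENNReal.ofReal ((|ζ| + 1) ^ p) *
          ∫⁻ u in Ioi 0, ENNReal.ofReal (u ^ p * (u + κ) ^ (-2 - 2 * p)) := by
        rw [lintegral_const_mul' _ _ ENNReal.ofReal_ne_top, lintegral_sub_right_eq_self,
          lintegral_indicator measurableSet_Ioi]
    _ ≤ _ := by grw [lintegral_Ioi_zero_rpow_mul_rpow_le hp hκ]

theorem setLIntegral_Ioi_rpow_mul_sq_norm_le {p κ : ℝ} (hκ : 0 < κ) {Q F : ℝ → ℂ}
    (hQ : Measurable Q) (hF : Measurable F) :
    ∫⁻ ξ in Ioi (0 : ℝ), ENNReal.ofReal ((ξ + 1) ^ p *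
        ‖∫ η in Ioi (0 : ℝ), Q (ξ - η) * F η / ((η + κ : ℝ) : ℂ)‖ ^ 2) ≤
      (∫⁻ ζ, ENNReal.ofReal (‖Q ζ‖ ^ 2) *
        ∫⁻ η, (Ioi 0).indicator (fun x => ENNReal.ofReal ((x + 1) ^ p)) (ζ + η) *
          (Ioi 0).indicator (fun y => ENNReal.ofReal ((y + κ) ^ (-2 - p))) η) *
      ∫⁻ η in Ioi (0 : ℝ), ENNReal.ofReal ((η + κ) ^ p * ‖F η‖ ^ 2) := by
  set w := (Ioi (0 : ℝ)).indicator fun x => ENNReal.ofReal ((x + 1) ^ p) with hw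
  set k := (Ioi (0 : ℝ)).indicator fun y => ENNReal.ofReal ((y + κ) ^ (-2 - p)) with hk
  set q : ℝ → ENNReal := fun ζ => ENNReal.ofReal (‖Q ζ‖ ^ 2)
  set B := ∫⁻ η in Ioi (0 : ℝ), ENNReal.ofReal ((η + κ) ^ p * ‖F η‖ ^ 2)
  have hw_meas : Measurable w := Measurable.indicator (by fun_prop) measurableSet_Ioi
  have hk_meas : Measurable k := Measurable.indicator (by fun_prop) measurableSet_Ioi
  have hCS (ξ : ℝ) :
      ENNReal.ofReal (‖∫ η in Ioi (0 : ℝ), Q (ξ - η) * F η / ((η + κ : ℝ) : ℂ)‖ ^ 2) ≤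
        (∫⁻ η, q (ξ - η) * k η) * B := by
    convert ofReal_sq_norm_setIntegral_Ioi_div_le (p := p) (G := fun η => Q (ξ - η)) hκ
      (hQ.comp (measurable_const.sub measurable_id)) hF using 2
    rw [← lintegral_indicator measurableSet_Ioi]
    refine lintegral_congr fun η => ?_
    by_cases hη : η ∈ Ioi 0
    · simp only [hk, indicator_of_mem hη, q, ENNReal.ofReal_mul (sq_nonneg _)]
    · simp [hk, indicator_of_notMem hη]
  calc _ ≤ (∫⁻ ξ, w ξ * ∫⁻ η, q (ξ - η) * k η) * B := by
        rw [← lintegral_mul_const'' _ (by fun_prop), ← lintegral_indicator measurableSet_Ioi]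
        refine lintegral_mono fun ξ => ?_
        by_cases hξ : ξ ∈ Ioi 0
        · rw [indicator_of_mem hξ, hw, indicator_of_mem hξ,
            ENNReal.ofReal_mul (Real.rpow_nonneg (by linarith [mem_Ioi.1 hξ]) _), mul_assoc]
          gcongr
          exact hCS ξ
        · simp [indicator_of_notMem hξ]
    _ = (∫⁻ ζ, q ζ * ∫⁻ η, w (ζ + η) * k η) * B := by
        rw [lintegral_mul_lintegral_sub_mul hw_meas (by fun_prop) hk_meas]

/-- Fourier-side form of `‖C₊ q R₀(κ) C₊ f‖_{H^s} ≲ κ^{-2ε} ‖q‖_{H^s} ‖f₊‖_{H^s_κ}`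
for `s ∈ (-1/2, 0)` and `ε = (1/2+s)/2`. -/
theorem stmt2 (s : ℝ) (hs : s ∈ Set.Ioo (-(1/2) : ℝ) 0) :
    ∃ C : ℝ, 0 < C ∧
      ∀ κ : ℝ, 1 ≤ κ →
        ∀ Q F : ℝ → ℂ, Measurable Q → Measurable F →
          (∫⁻ ξ in Ioi (0 : ℝ),
              ENNReal.ofReal ((ξ + 1) ^ (2 * s) *
                ‖∫ η in Ioi (0 : ℝ), Q (ξ - η) * F η / ((η + κ : ℝ) : ℂ)‖ ^ 2))
            ≤ ENNReal.ofReal (C * κ ^ (-(4 * ((1/2 + s) / 2)))) *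
                (∫⁻ ξ : ℝ, ENNReal.ofReal ((|ξ| + 1) ^ (2 * s) * ‖Q ξ‖ ^ 2)) *
                (∫⁻ ξ in Ioi (0 : ℝ), ENNReal.ofReal ((ξ + κ) ^ (2 * s) * ‖F ξ‖ ^ 2)) := by
  obtain ⟨hs₁, hs₂⟩ := hs
  refine ⟨2 / (2 * s + 1), div_pos two_pos (by linarith), fun κ hκ Q F hQ hF => ?_⟩
  have hκ₀ : 0 < κ := by linarith
  calc _ ≤ _ := setLIntegral_Ioi_rpow_mul_sq_norm_le hκ₀ hQ hF
    _ ≤ (∫⁻ ζ, ENNReal.ofReal (‖Q ζ‖ ^ 2) * (ENNReal.ofReal ((|ζ| + 1) ^ (2 * s)) *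
          ENNReal.ofReal (2 / (2 * s + 1) * κ ^ (-(2 * s + 1))))) *
          ∫⁻ η in Ioi (0 : ℝ), ENNReal.ofReal ((η + κ) ^ (2 * s) * ‖F η‖ ^ 2) := by
        gcongr with ζ
        exact lintegral_indicator_mul_indicator_le (by linarith) (by linarith) hκ₀ ζ
    _ = _ := by
        rw [show -(4 * ((1 / 2 + s) / 2)) = -(2 * s + 1) by ring,
          ← lintegral_const_mul' _ _ ENNReal.ofReal_ne_top]
        congr 1
        refine lintegral_congr fun ζ => ?_
        rw [ENNReal.ofReal_mul (p := (|ζ| + 1) ^ (2 * s)) (Real.rpow_nonneg (by positivity) _)]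
        ring
end

section
/- For every κ > 0 and every measurable function Q : ℝ → ℂ, one has the identity ∫_0^∞ ∫_0^∞ |Q(ξ-η)|² / ((η+κ)(ξ+κ)) dη dξ = ∫_ℝ (log(1 + |ξ|/κ)/|ξ|) |Q(ξ)|² dξ (with the integrand on the right interpreted as |Q(0)|²/κ at ξ = 0), where both sides may be infinite simultaneously. Moreover, for every s ∈ (−1/2, 0) there is a constant C > 0 such that, with ε = (1/2+s)/2, the common value is at most C κ^{-4ε} ∫_ℝ (|ξ|+κ)^{2s} |Q(ξ)|² dξ for all κ ≥ 1. (This computes the Hilbert–Schmidt norm of R₀(κ)^{1/2} C₊ q R₀(κ)^{1/2} on the Hardy space when Q = q̂.) -/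
/-!
Write `g(ξ) = 1_{ξ>0} (ξ+κ)⁻¹`. Translating `ξ = η + t` and applying Tonelli turns the double
integral into `∫ |Q(t)|² A(t) dt`, where `A(t) = ∫ g(η+t) g(η) dη` is the autocorrelation of `g`.
`A` is even, and for `t > 0` the antiderivative `-log(1 + t/(η+κ))/t` gives
`A(t) = log(1 + t/κ)/t`. For the bound, `δ log y ≤ y^δ - 1 ≤ (y-1) y^(δ-1)` for `y ≥ 1`,
`0 < δ ≤ 1`; with `y = 1 + |ξ|/κ` and `δ = 1 + 2s = 4ε` this is
`log(1 + |ξ|/κ)/|ξ| ≤ δ⁻¹ κ^(-δ) (|ξ|+κ)^(2s)`.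
-/

open MeasureTheory Set Filter Real
open scoped ENNReal Topology

section Autocorrelation

variable {G : Type*} [MeasurableSpace G] [AddCommGroup G] {μ : Measure G}

variable (μ) in
noncomputable def autocorrelation (g : G → ℝ≥0∞) (t : G) : ℝ≥0∞ := ∫⁻ y, g (t + y) * g y ∂μ

theorem autocorrelation_neg [MeasurableAdd G] [μ.IsAddRightInvariant] (g : G → ℝ≥0∞) (t : G) :
    autocorrelation μ g (-t) = autocorrelation μ g t := by
  rw [autocorrelation, ← lintegral_add_right_eq_self _ t, autocorrelation]
  congr 1 with y
  rw [show -t + (y + t) = y by abel, add_comm y t, mul_comm]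

theorem lintegral_lintegral_mul_mul_comp_sub [MeasurableAdd₂ G] [MeasurableSub₂ G] [SFinite μ]
    [μ.IsAddRightInvariant] {g F : G → ℝ≥0∞} (hg : Measurable g) (hF : Measurable F) :
    ∫⁻ x, ∫⁻ y, g x * g y * F (x - y) ∂μ ∂μ = ∫⁻ t, F t * autocorrelation μ g t ∂μ := by
  rw [lintegral_lintegral_swap (by fun_prop)]
  have shift : ∀ y, ∫⁻ x, g x * g y * F (x - y) ∂μ = ∫⁻ t, g (t + y) * g y * F t ∂μ :=
    fun y => by rw [← lintegral_add_right_eq_self _ y]; simp only [add_sub_cancel_right]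
  simp_rw [shift]
  rw [lintegral_lintegral_swap (by fun_prop)]
  refine lintegral_congr fun t => ?_
  rw [autocorrelation, ← lintegral_const_mul _ (by fun_prop)]
  simp only [mul_comm]

end Autocorrelation

theorem lintegral_Ioi_inv_mul_inv {a d : ℝ} (ha : 0 < a) (hd : 0 < d) :
    ∫⁻ x in Ioi 0, ENNReal.ofReal ((d + x + a)⁻¹ * (x + a)⁻¹)
      = ENNReal.ofReal (log (1 + d / a) / d) := by
  set F : ℝ → ℝ := fun x => -(log (1 + d / (x + a)) / d)
  have hderiv : ∀ x ∈ Ici (0 : ℝ), HasDerivAt F ((d + x + a)⁻¹ * (x + a)⁻¹) x := by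
    intro x (hx : 0 ≤ x)
    have hxa : 0 < x + a := by positivity
    have h := (((hasDerivAt_const x d).fun_div ((hasDerivAt_id' x).add_const a)
      hxa.ne').const_add 1).log (by positivity) |>.div_const d |>.neg
    refine h.congr_deriv ?_
    field_simp
    ring
  have hpos : ∀ x ∈ Ioi (0 : ℝ), 0 ≤ (d + x + a)⁻¹ * (x + a)⁻¹ := fun x (hx : 0 < x) => by
    positivity
  have hlim : Tendsto F atTop (𝓝 0) := by
    have h := ((tendsto_const_nhds (x := d)).div_atTop
      (tendsto_atTop_add_const_right _ a tendsto_id)).const_add 1 |>.log (by norm_num)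
      |>.div_const d |>.neg
    simpa using h
  rw [← ofReal_integral_eq_lintegral_ofReal (integrableOn_Ioi_deriv_of_nonneg' hderiv hpos hlim)
    ((ae_restrict_iff' measurableSet_Ioi).2 (ae_of_all _ hpos)),
    integral_Ioi_of_hasDerivAt_of_nonneg' hderiv hpos hlim]
  simp [F]

/-- The Fourier multiplier of `R₀(κ)` on the Hardy space, whose frequencies are `ξ > 0`. -/
noncomputable def hardyResolventSymbol (κ : ℝ) : ℝ → ℝ≥0∞ :=
  (Ioi 0).indicator fun x => ENNReal.ofReal (x + κ)⁻¹

theorem measurable_hardyResolventSymbol (κ : ℝ) : Measurable (hardyResolventSymbol κ) :=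
  (by fun_prop : Measurable fun x : ℝ => ENNReal.ofReal (x + κ)⁻¹).indicator measurableSet_Ioi

theorem autocorrelation_hardyResolventSymbol_of_pos {κ t : ℝ} (hκ : 0 < κ) (ht : 0 < t) :
    autocorrelation volume (hardyResolventSymbol κ) t = ENNReal.ofReal (log (1 + t / κ) / t) := by
  rw [← lintegral_Ioi_inv_mul_inv hκ ht, autocorrelation, ← lintegral_indicator measurableSet_Ioi]
  congr 1 with y
  by_cases hy : 0 < y
  · have hty : 0 < t + y := by linarith
    simp [hardyResolventSymbol, hy, hty, add_assoc,
      ENNReal.ofReal_mul (by positivity : 0 ≤ (t + (y + κ))⁻¹)]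
  · simp [hardyResolventSymbol, hy]

theorem log_one_add_abs_div_div_abs_nonneg {κ : ℝ} (hκ : 0 ≤ κ) (t : ℝ) :
    0 ≤ log (1 + |t| / κ) / |t| :=
  div_nonneg (log_nonneg (le_add_of_nonneg_right (by positivity))) (abs_nonneg t)

theorem autocorrelation_hardyResolventSymbol {κ t : ℝ} (hκ : 0 < κ) (ht : t ≠ 0) :
    autocorrelation volume (hardyResolventSymbol κ) t
      = ENNReal.ofReal (log (1 + |t| / κ) / |t|) := by
  rw [← autocorrelation_hardyResolventSymbol_of_pos hκ (abs_pos.2 ht)]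
  rcases abs_choice t with h | h <;> rw [h]
  rw [autocorrelation_neg]

theorem lintegral_Ioi_lintegral_Ioi_comp_sub {κ : ℝ} (hκ : 0 < κ) {f : ℝ → ℝ} (hf : Measurable f) :
    ∫⁻ ξ in Ioi 0, ∫⁻ η in Ioi 0, ENNReal.ofReal (f (ξ - η) / ((η + κ) * (ξ + κ)))
      = ∫⁻ t, ENNReal.ofReal (log (1 + |t| / κ) / |t| * f t) := by
  set g := hardyResolventSymbol κ
  have hprod : ∫⁻ ξ in Ioi 0, ∫⁻ η in Ioi 0, ENNReal.ofReal (f (ξ - η) / ((η + κ) * (ξ + κ)))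
      = ∫⁻ ξ, ∫⁻ η, g ξ * g η * ENNReal.ofReal (f (ξ - η)) := by
    rw [← lintegral_indicator measurableSet_Ioi]
    congr 1 with ξ
    by_cases hξ : 0 < ξ
    · rw [indicator_of_mem (mem_Ioi.2 hξ), ← lintegral_indicator measurableSet_Ioi]
      congr 1 with η
      by_cases hη : 0 < η
      · simp only [g, hardyResolventSymbol, indicator_of_mem (mem_Ioi.2 hξ),
          indicator_of_mem (mem_Ioi.2 hη)]
        rw [div_eq_mul_inv, mul_inv, ENNReal.ofReal_mul' (by positivity),
          ENNReal.ofReal_mul' (by positivity)]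
        ring
      · simp [g, hardyResolventSymbol, hη]
    · simp [g, hardyResolventSymbol, hξ]
  rw [hprod, lintegral_lintegral_mul_mul_comp_sub (measurable_hardyResolventSymbol κ)
    hf.ennreal_ofReal]
  refine lintegral_congr_ae ((volume.ae_ne 0).mono fun t ht => ?_)
  dsimp only
  rw [autocorrelation_hardyResolventSymbol hκ ht, mul_comm,
    ENNReal.ofReal_mul (log_one_add_abs_div_div_abs_nonneg hκ.le t)]

theorem log_one_add_le_mul_rpow {δ u : ℝ} (hδ : 0 < δ) (hδ1 : δ ≤ 1) (hu : 0 ≤ u) :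
    log (1 + u) ≤ δ⁻¹ * (u * (1 + u) ^ (δ - 1)) := by
  have h1u : 0 < 1 + u := by linarith
  have hlog : δ * log (1 + u) ≤ (1 + u) ^ δ - 1 := by
    rw [← log_rpow h1u]
    exact log_le_sub_one_of_pos (rpow_pos_of_pos h1u δ)
  have hsplit : (1 + u) ^ δ = (1 + u) * (1 + u) ^ (δ - 1) := by
    rw [← rpow_one_add' h1u.le (by linarith), add_sub_cancel]
  have hle : (1 + u) ^ (δ - 1) ≤ 1 := rpow_le_one_of_one_le_of_nonpos (by linarith) (by linarith)
  rw [le_inv_mul_iff₀ hδ]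
  nlinarith

theorem log_one_add_abs_div_div_abs_le {δ κ : ℝ} (hδ : 0 < δ) (hδ1 : δ ≤ 1) (hκ : 0 < κ)
    (t : ℝ) :
    log (1 + |t| / κ) / |t| ≤ δ⁻¹ * κ ^ (-δ) * (|t| + κ) ^ (δ - 1) := by
  rcases eq_or_ne t 0 with rfl | ht
  · simp only [abs_zero, div_zero]
    positivity
  have key := log_one_add_le_mul_rpow hδ hδ1 (div_nonneg (abs_nonneg t) hκ.le)
  have hsum : 1 + |t| / κ = (|t| + κ) / κ := by field_simp; ring
  rw [hsum, div_rpow (by positivity) hκ.le, rpow_sub_one hκ.ne'] at key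
  rw [hsum, div_le_iff₀ (abs_pos.2 ht), rpow_neg hκ.le]
  calc log ((|t| + κ) / κ) ≤ _ := key
    _ = _ := by field_simp

theorem lintegral_log_weight_le {δ κ : ℝ} (hδ : 0 < δ) (hδ1 : δ ≤ 1) (hκ : 0 < κ) (f : ℝ → ℝ) :
    ∫⁻ t, ENNReal.ofReal (log (1 + |t| / κ) / |t| * f t)
      ≤ ENNReal.ofReal (δ⁻¹ * κ ^ (-δ)) * ∫⁻ t, ENNReal.ofReal ((|t| + κ) ^ (δ - 1) * f t) := by
  rw [← lintegral_const_mul' _ _ ENNReal.ofReal_ne_top]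
  refine lintegral_mono fun t => ?_
  rw [← ENNReal.ofReal_mul (by positivity), ← mul_assoc,
    ENNReal.ofReal_mul (log_one_add_abs_div_div_abs_nonneg hκ.le t),
    ENNReal.ofReal_mul (by positivity)]
  gcongr
  exact log_one_add_abs_div_div_abs_le hδ hδ1 hκ t

/-- The Hilbert–Schmidt norm identity
`∫_0^∞∫_0^∞ |Q(ξ-η)|²/((η+κ)(ξ+κ)) dη dξ = ∫_ℝ (log(1+|ξ|/κ)/|ξ|) |Q(ξ)|² dξ`
(both sides possibly infinite), together with the bound by `C κ^{-4ε} ‖q‖²_{H^s_κ}`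
for `s ∈ (-1/2,0)`, `ε = (1/2+s)/2`, `κ ≥ 1`. -/
theorem stmt4 (s : ℝ) (hs : s ∈ Set.Ioo (-(1/2) : ℝ) 0) :
    ∃ C : ℝ, 0 < C ∧
      ∀ Q : ℝ → ℂ, Measurable Q →
        (∀ κ : ℝ, 0 < κ →
          (∫⁻ ξ in Ioi (0 : ℝ), ∫⁻ η in Ioi (0 : ℝ),
              ENNReal.ofReal (‖Q (ξ - η)‖ ^ 2 / ((η + κ) * (ξ + κ))))
            = ∫⁻ ξ : ℝ, ENNReal.ofReal (Real.log (1 + |ξ| / κ) / |ξ| * ‖Q ξ‖ ^ 2)) ∧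
        (∀ κ : ℝ, 1 ≤ κ →
          (∫⁻ ξ in Ioi (0 : ℝ), ∫⁻ η in Ioi (0 : ℝ),
              ENNReal.ofReal (‖Q (ξ - η)‖ ^ 2 / ((η + κ) * (ξ + κ))))
            ≤ ENNReal.ofReal (C * κ ^ (-(4 * ((1/2 + s) / 2)))) *
                ∫⁻ ξ : ℝ, ENNReal.ofReal ((|ξ| + κ) ^ (2 * s) * ‖Q ξ‖ ^ 2)) := by
  obtain ⟨hs_gt, hs_lt⟩ := hs
  have hδ : 0 < 1 + 2 * s := by linarith
  refine ⟨(1 + 2 * s)⁻¹, inv_pos.2 hδ, fun Q hQ => ⟨fun κ hκ => ?_, fun κ hκ => ?_⟩⟩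
  · exact lintegral_Ioi_lintegral_Ioi_comp_sub hκ (hQ.norm.pow_const 2)
  · have hκ₀ : 0 < κ := by linarith
    have hbound := lintegral_log_weight_le hδ (by linarith) hκ₀ fun ξ => ‖Q ξ‖ ^ 2
    rw [add_sub_cancel_left, show -(1 + 2 * s) = -(4 * ((1/2 + s) / 2)) by ring] at hbound
    rwa [lintegral_Ioi_lintegral_Ioi_comp_sub hκ₀ (hQ.norm.pow_const 2)]
end

section
/- Let q be a real-valued Schwartz function on ℝ, let ϰ > 0, and let n be a Schwartz function on ℝ whose Fourier transform is supported in [0,∞) and which solves the gauge equation n' = −iϰ n + i C₊(q(n+1)). Then ∫_ℝ ( |n|² + n + conj(n) )(x) · q'(x) dx = 0. (This expresses the Poisson commutativity { β(ϰ), P } = 0 of β with the momentum P(q) = ∫ q²/2.) -/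
/-!
Put `f = q (n + 1)`, so that the gauge equation reads `n' = -iϰ n + i C₊ f`. Pairing it with `n̄`
and using `Re ∫ n' n̄ = 0`, the reality of `∫ |n|²` and `∫ C₊f · n̄ = ∫ f n̄` (Plancherel, as `n̂`
vanishes on `ξ < 0`) shows that `A = ∫ f n̄` is real. Integrating by parts, and using that `q` is
real, the integral in question equals `-2 Re ∫ n' f̄ = -2 Re (-iϰ Ā + i ∫ C₊f · f̄)`; here
`∫ C₊f · f̄ = ∫_{ξ ≥ 0} |f̂|²` is real, so this is `2ϰ Im A = 0`.
-/

open MeasureTheory Set ComplexConjugate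

/-- Fourier transform with the convention `f̂(ξ) = (2π)^{-1/2} ∫ e^{-iξx} f(x) dx`. -/
noncomputable def FT (f : ℝ → ℂ) (ξ : ℝ) : ℂ :=
  (Real.sqrt (2 * Real.pi))⁻¹ * ∫ x : ℝ, Complex.exp (-(Complex.I * ξ * x)) * f x

/-- Cauchy–Szegő projection `C₊`, the Fourier multiplier with symbol `1_{[0,∞)}`. -/
noncomputable def Cplus (f : ℝ → ℂ) (x : ℝ) : ℂ :=
  (Real.sqrt (2 * Real.pi))⁻¹ * ∫ ξ in Ici (0 : ℝ), Complex.exp (Complex.I * ξ * x) * FT f ξ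

/-- The gauge equation `n' = -iϰ n + i C₊(q(n+1))`. -/
def SolvesGauge (q : ℝ → ℂ) (κ : ℝ) (m : ℝ → ℂ) : Prop :=
  ∀ x : ℝ, deriv m x = -Complex.I * κ * m x + Complex.I * Cplus (fun y => q y * (m y + 1)) x

open SchwartzMap Complex FourierTransform

namespace SchwartzMap

variable {E : Type*} [NormedAddCommGroup E] [NormedSpace ℝ E]

noncomputable def conjCLM : 𝓢(E, ℂ) →L[ℝ] 𝓢(E, ℂ) :=
  postcompCLM (conjCLE : ℂ ≃L[ℝ] ℂ).toContinuousLinearMap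

@[simp] lemma conjCLM_apply (f : 𝓢(E, ℂ)) (x : E) : conjCLM f x = conj (f x) := rfl

lemma integrable_mul_conj [MeasurableSpace E] [BorelSpace E] [SecondCountableTopology E]
    {μ : Measure E} [μ.HasTemperateGrowth] (f g : 𝓢(E, ℂ)) :
    Integrable (fun x ↦ f x * conj (g x)) μ :=
  (pairing (.mul ℝ ℂ) f (conjCLM g)).integrable

lemma integrable_deriv_mul_conj (f g : 𝓢(ℝ, ℂ)) :
    Integrable (fun x ↦ deriv f x * conj (g x)) :=
  integrable_mul_conj (derivCLM ℝ ℂ f) g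

lemma hasDerivAt_conjCLM (f : 𝓢(ℝ, ℂ)) (x : ℝ) :
    HasDerivAt (conjCLM f) (conj (deriv f x)) x :=
  (f.hasDerivAt x).star

end SchwartzMap

lemma conj_integral_mul_conj {X : Type*} [MeasurableSpace X] (μ : Measure X) (u v : X → ℂ) :
    conj (∫ x, u x * conj (v x) ∂μ) = ∫ x, v x * conj (u x) ∂μ := by
  rw [← integral_conj]
  simp only [map_mul, conj_conj, mul_comm]

section Fourier

local notation "𝔠" => (((Real.sqrt (2 * Real.pi))⁻¹ : ℝ) : ℂ)

lemma normalization_sq_mul_two_pi : 𝔠 * 𝔠 * (2 * Real.pi : ℝ) = 1 := by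
  rw [← ofReal_mul, ← ofReal_mul, ← mul_inv, Real.mul_self_sqrt (by positivity),
    inv_mul_cancel₀ (by positivity), ofReal_one]

lemma FT_eq_fourier (f : ℝ → ℂ) (ξ : ℝ) : FT f ξ = 𝔠 * 𝓕 f (ξ / (2 * Real.pi)) := by
  rw [FT, Real.fourier_eq']
  congr 2 with x
  rw [smul_eq_mul, RCLike.inner_apply, conj_trivial,
    show -2 * Real.pi * (ξ / (2 * Real.pi) * x) = -(ξ * x) by field_simp]
  push_cast
  ring_nf

lemma integrable_FT (f : 𝓢(ℝ, ℂ)) : Integrable (FT f) := by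
  simp_rw [funext (FT_eq_fourier f), ← fourier_coe]
  exact ((𝓕 f).integrable.comp_div (by positivity)).const_mul 𝔠

lemma conj_FT (g : ℝ → ℂ) (ξ : ℝ) :
    conj (FT g ξ) = 𝔠 * ∫ x : ℝ, exp (I * ξ * x) * conj (g x) := by
  rw [FT, map_mul, conj_ofReal, ← integral_conj]
  simp only [map_mul, ← exp_conj, map_neg, conj_I, conj_ofReal]
  ring_nf

theorem integral_FT_mul_conj (f g : 𝓢(ℝ, ℂ)) :
    ∫ ξ, FT f ξ * conj (FT g ξ) = ∫ x, f x * conj (g x) := by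
  have plancherel := integral_inner_fourier_fourier g f
  simp only [RCLike.inner_apply] at plancherel
  simp_rw [FT_eq_fourier, map_mul, conj_ofReal]
  calc ∫ ξ, 𝔠 * 𝓕 f (ξ / (2 * Real.pi)) * (𝔠 * conj (𝓕 g (ξ / (2 * Real.pi))))
      = 𝔠 * 𝔠 * ∫ ξ, (fun w ↦ 𝓕 f w * conj (𝓕 g w)) (ξ / (2 * Real.pi)) := by
        rw [← integral_const_mul]; congr 1 with ξ; ring
    _ = ∫ x, f x * conj (g x) := by
        rw [Measure.integral_comp_div (fun w ↦ 𝓕 f w * conj (𝓕 g w)), abs_of_pos (by positivity),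
          real_smul, ← mul_assoc, normalization_sq_mul_two_pi, one_mul]
        simpa only [mul_comm (conj _), fourier_coe] using plancherel

theorem integral_Cplus_mul_conj (f g : 𝓢(ℝ, ℂ)) :
    ∫ x, Cplus f x * conj (g x) = ∫ ξ in Ici 0, FT f ξ * conj (FT g ξ) := by
  set K : ℝ → ℝ → ℂ := fun x ξ ↦ FT f ξ * (𝔠 * (exp (I * ξ * x) * conj (g x)))
  have hK : Integrable (Function.uncurry K) (volume.prod (volume.restrict (Ici 0))) := by
    refine (((conjCLM g).integrable.mul_prod (integrable_FT f).restrict).bdd_mul (c := ‖𝔠‖)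
      (f := fun p : ℝ × ℝ ↦ 𝔠 * exp (I * p.2 * p.1)) (by fun_prop)
      (.of_forall fun p ↦ ?_)).congr (.of_forall fun p ↦ ?_)
    · simp [norm_exp]
    · simp only [Function.uncurry, K, conjCLM_apply]; ring
  calc ∫ x, Cplus f x * conj (g x) = ∫ x, ∫ ξ in Ici 0, K x ξ := by
        congr 1 with x
        rw [Cplus, mul_assoc, ← integral_mul_const, ← integral_const_mul]
        congr 1 with ξ
        ring
    _ = ∫ ξ in Ici 0, ∫ x, K x ξ := integral_integral_swap hK
    _ = ∫ ξ in Ici 0, FT f ξ * conj (FT g ξ) := by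
        congr 1 with ξ
        rw [integral_const_mul, integral_const_mul, conj_FT]

end Fourier

theorem integral_Cplus_mul_conj_of_FT_eq_zero (f : 𝓢(ℝ, ℂ)) {g : 𝓢(ℝ, ℂ)}
    (hg : ∀ ξ : ℝ, ξ < 0 → FT g ξ = 0) :
    ∫ x, Cplus f x * conj (g x) = ∫ x, f x * conj (g x) := by
  rw [integral_Cplus_mul_conj, setIntegral_eq_integral_of_forall_compl_eq_zero,
    integral_FT_mul_conj]
  intro ξ hξ
  rw [hg ξ (not_le.mp hξ), map_zero, mul_zero]

theorem conj_integral_Cplus_mul_conj_self (f : 𝓢(ℝ, ℂ)) :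
    conj (∫ x, Cplus f x * conj (f x)) = ∫ x, Cplus f x * conj (f x) := by
  rw [integral_Cplus_mul_conj]
  exact conj_integral_mul_conj _ _ _

theorem integral_deriv_mul_conj_add_conj (n : 𝓢(ℝ, ℂ)) :
    (∫ x, deriv n x * conj (n x)) + conj (∫ x, deriv n x * conj (n x)) = 0 := by
  have ibp := integral_mul_deriv_eq_neg_deriv_mul (conjCLM n) n
  simp only [(hasDerivAt_conjCLM n _).deriv, conjCLM_apply] at ibp
  rw [conj_integral_mul_conj]
  calc (∫ x, deriv n x * conj (n x)) + ∫ x, n x * conj (deriv n x)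
      = (∫ x, conj (n x) * deriv n x) + ∫ x, conj (deriv n x) * n x := by simp only [mul_comm]
    _ = 0 := by rw [ibp, neg_add_cancel]

theorem integral_normSq_add_add_conj_mul_deriv {n q f : 𝓢(ℝ, ℂ)}
    (hq : ∀ x, conj (q x) = q x) (hf : ∀ x, f x = q x * (n x + 1)) :
    ∫ x, (((‖n x‖ ^ 2 : ℝ) : ℂ) + n x + conj (n x)) * deriv q x
      = -((∫ x, deriv n x * conj (f x)) + conj (∫ x, deriv n x * conj (f x))) := by
  set F : 𝓢(ℝ, ℂ) := pairing (.mul ℝ ℂ) n (conjCLM n) + n + conjCLM n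
  have hF : ∀ x, HasDerivAt F
      (deriv n x * conj (n x) + n x * conj (deriv n x) + deriv n x + conj (deriv n x)) x :=
    fun x ↦ (((n.hasDerivAt x).mul (hasDerivAt_conjCLM n x)).add (n.hasDerivAt x)).add
      (hasDerivAt_conjCLM n x)
  have hf' : Integrable (fun x ↦ f x * conj (deriv n x)) := integrable_mul_conj f (derivCLM ℝ ℂ n)
  calc ∫ x, (((‖n x‖ ^ 2 : ℝ) : ℂ) + n x + conj (n x)) * deriv q x
      = ∫ x, F x * deriv q x := by simp [F, mul_conj']
    _ = -∫ x, deriv F x * q x := integral_mul_deriv_eq_neg_deriv_mul F q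
    _ = -∫ x, (deriv n x * conj (f x) + f x * conj (deriv n x)) := by
        congr 2 with x
        rw [(hF x).deriv, hf, map_mul, hq]
        simp only [map_add, map_one]
        ring
    _ = _ := by rw [integral_add (integrable_deriv_mul_conj n f) hf', conj_integral_mul_conj]

section Gauge

variable {n f : 𝓢(ℝ, ℂ)} {κ : ℝ}

theorem integral_deriv_mul_conj_of_gauge
    (hgauge : ∀ x, deriv n x = -I * κ * n x + I * Cplus f x) (g : 𝓢(ℝ, ℂ)) :
    ∫ x, deriv n x * conj (g x)
      = -I * κ * (∫ x, n x * conj (g x)) + I * ∫ x, Cplus f x * conj (g x) := by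
  have hCplus : I * ∫ x, Cplus f x * conj (g x)
      = ∫ x, (deriv n x * conj (g x) + I * κ * (n x * conj (g x))) := by
    rw [← integral_const_mul]
    congr 1 with x
    rw [hgauge x]
    ring
  rw [integral_add (integrable_deriv_mul_conj n g) ((integrable_mul_conj n g).const_mul _),
    integral_const_mul] at hCplus
  linear_combination -hCplus

theorem conj_integral_mul_conj_of_gauge
    (hgauge : ∀ x, deriv n x = -I * κ * n x + I * Cplus f x) (hn : ∀ ξ : ℝ, ξ < 0 → FT n ξ = 0) :
    conj (∫ x, f x * conj (n x)) = ∫ x, f x * conj (n x) := by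
  have hD := integral_deriv_mul_conj_add_conj n
  rw [integral_deriv_mul_conj_of_gauge hgauge n, integral_Cplus_mul_conj_of_FT_eq_zero f hn] at hD
  simp only [map_add, map_mul, map_neg, conj_I, conj_ofReal,
    conj_integral_mul_conj volume n n] at hD
  -- `hD` now says `i (A - Ā) = 0` for `A = ∫ f n̄`
  linear_combination I * hD + (conj (∫ x, f x * conj (n x)) - ∫ x, f x * conj (n x)) * I_sq

end Gauge

theorem stmt10_general (q n : SchwartzMap ℝ ℂ) (ϰ : ℝ)
    (hq : ∀ x : ℝ, (q x).im = 0)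
    (hn : ∀ ξ : ℝ, ξ < 0 → FT (⇑n) ξ = 0)
    (hgn : SolvesGauge (⇑q) ϰ (⇑n)) :
    (∫ x : ℝ, (((‖n x‖ ^ 2 : ℝ) : ℂ) + n x + conj (n x)) * deriv (⇑q) x) = 0 := by
  set f : 𝓢(ℝ, ℂ) := pairing (.mul ℝ ℂ) q n + q
  have hf : ∀ x, f x = q x * (n x + 1) := fun x ↦ by simp [f, mul_add]
  have hgauge : ∀ x, deriv n x = -I * ϰ * n x + I * Cplus f x := by
    simpa only [SolvesGauge, ← funext hf] using hgn
  have hA_real := conj_integral_mul_conj_of_gauge hgauge hn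
  have hCplus_real := conj_integral_Cplus_mul_conj_self f
  rw [integral_normSq_add_add_conj_mul_deriv (fun x ↦ conj_eq_iff_im.mpr (hq x)) hf,
    integral_deriv_mul_conj_of_gauge hgauge f, ← conj_integral_mul_conj]
  simp only [map_add, map_mul, map_neg, conj_I, conj_ofReal, conj_conj, hCplus_real]
  linear_combination (I * ϰ) * hA_real

/-- Poisson commutativity `{β(ϰ), P} = 0`:
`∫ (|n|² + n + conj n) q' dx = 0`. -/
theorem stmt10 (q n : SchwartzMap ℝ ℂ) (ϰ : ℝ) (hϰ : 0 < ϰ)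
    (hq : ∀ x : ℝ, (q x).im = 0)
    (hn : ∀ ξ : ℝ, ξ < 0 → FT (⇑n) ξ = 0)
    (hgn : SolvesGauge (⇑q) ϰ (⇑n)) :
    (∫ x : ℝ, (((‖n x‖ ^ 2 : ℝ) : ℂ) + n x + conj (n x)) * deriv (⇑q) x) = 0 :=
  stmt10_general q n ϰ hq hn hgn
end

section
/- Fix c > 0 and let Q_c(x) = 2c/(c²x² + 1) and f(x) = 1/(cx + i). Then f satisfies the eigenvalue equation −i f'(x) − C₊(Q_c · f)(x) = −(c/2) f(x) for all x ∈ ℝ. (Thus when q = Q_c is the Benjamin–Ono soliton profile, the Lax operator L = −i∂ − C₊ q has eigenvalue −c/2 with eigenvector (cx+i)^{-1}.) -/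
/-!
With `m(ξ) = (2 ξ₊ / c + 1) e^{-|ξ|/c}` and `a = i x - 1/c`, the elementary integrals
`∫_{ξ > 0} ξ^k e^{a ξ} dξ` and `∫_{ξ < 0} e^{(a + 2/c) ξ} dξ` show that
`Q_c f(x) = -(i/2) ∫ e^{i ξ x} m(ξ) dξ`. Since `m` is continuous and integrable, Fourier inversion
identifies `FT (Q_c f) = -i √(π/2) m`, so `C₊(Q_c f)(x) = -(i/2) ∫_{ξ ≥ 0} e^{i ξ x} m(ξ) dξ
= -(i/2) (2/(c a²) - 1/a)`. As `c x + i = -i c a`, the eigenvalue equation is then a rational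
identity in `a`.
-/

open MeasureTheory Set ComplexConjugate

open Filter Topology FourierTransform Real

theorem tendsto_mul_exp_mul_complex_atTop {a : ℂ} (ha : a.re < 0) :
    Tendsto (fun x : ℝ => (x : ℂ) * Complex.exp (a * x)) atTop (𝓝 0) := by
  have h := tendsto_rpow_mul_exp_neg_mul_atTop_nhds_zero 1 (-a.re) (neg_pos.mpr ha)
  refine squeeze_zero_norm' ?_ h
  filter_upwards [eventually_ge_atTop 0] with x hx
  simp [Complex.norm_exp, abs_of_nonneg hx]

theorem integrableOn_mul_exp_mul_complex_Ioi {a : ℂ} (ha : a.re < 0) :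
    IntegrableOn (fun x : ℝ => (x : ℂ) * Complex.exp (a * x)) (Ioi 0) := by
  have h := integrableOn_rpow_mul_exp_neg_mul_rpow (p := 1) (s := 1) (b := -a.re)
    (by norm_num) (by norm_num) (neg_pos.mpr ha)
  refine h.mono' (by fun_prop) ?_
  filter_upwards [ae_restrict_mem measurableSet_Ioi] with x (hx : 0 < x)
  simp [Complex.norm_exp, abs_of_pos hx]

theorem integral_mul_exp_mul_complex_Ioi {a : ℂ} (ha : a.re < 0) :
    ∫ x : ℝ in Ioi 0, (x : ℂ) * Complex.exp (a * x) = 1 / a ^ 2 := by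
  have ha0 : a ≠ 0 := by rintro rfl; simp at ha
  have hderiv : ∀ x ∈ Ici (0 : ℝ), HasDerivAt (fun x : ℝ => ((x : ℂ) / a - 1 / a ^ 2) *
      Complex.exp (a * x)) ((x : ℂ) * Complex.exp (a * x)) x := by
    intro x _
    have hid : HasDerivAt (fun x : ℝ => (x : ℂ)) 1 x := (hasDerivAt_id x).ofReal_comp
    refine (((hid.div_const a).sub_const (1 / a ^ 2)).mul (hid.const_mul a).cexp).congr_deriv ?_
    field_simp
    ring
  have hlim : Tendsto (fun x : ℝ => ((x : ℂ) / a - 1 / a ^ 2) * Complex.exp (a * x))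
      atTop (𝓝 0) := by
    have hexp : Tendsto (fun x : ℝ => Complex.exp (a * x)) atTop (𝓝 0) := by
      simpa [Complex.tendsto_exp_nhds_zero_iff] using tendsto_const_nhds.neg_mul_atTop ha tendsto_id
    convert ((tendsto_mul_exp_mul_complex_atTop ha).div_const a).sub (hexp.const_mul (1 / a ^ 2))
      using 2 <;> ring
  rw [integral_Ioi_of_hasDerivAt_of_tendsto' hderiv (integrableOn_mul_exp_mul_complex_Ioi ha) hlim]
  simp

theorem FT_eq_of_integral_exp_mul_eq {g h : ℝ → ℂ} (hh : Integrable h) (hh_cont : Continuous h)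
    (hg : Integrable g)
    (hgh : ∀ x : ℝ, ∫ ξ : ℝ, Complex.exp (Complex.I * ξ * x) * h ξ = 2 * π * g x) (ξ : ℝ) :
    FT g ξ = (√(2 * π))⁻¹ * h ξ := by
  have h2π : 0 < 2 * π := by positivity
  -- Mathlib's `𝓕` uses the kernel `e^{-2πivw}`; rescaling `h` turns the hypothesis into `𝓕⁻ N = g`.
  set N : ℝ → ℂ := fun v => h (2 * π * v)
  have hN : Integrable N := (integrable_comp_mul_left_iff h h2π.ne').mpr hh
  have hinv : 𝓕⁻ N = g := by
    ext x
    have hF := Measure.integral_comp_mul_left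
      (fun ξ : ℝ => Complex.exp (Complex.I * ξ * x) * h ξ) (2 * π)
    rw [hgh, abs_of_pos (inv_pos.mpr h2π), Complex.real_smul, ← mul_assoc] at hF
    rw [Real.fourierInv_eq']
    convert hF using 1
    · congr 1 with v
      simp only [RCLike.inner_apply, conj_trivial, smul_eq_mul, N]
      push_cast
      ring_nf
    · push_cast
      field_simp
  have hFN : Integrable (𝓕 N) := by
    have : 𝓕 N = fun y => g (-y) := funext fun y => by
      rw [← neg_neg y, ← Real.fourierInv_eq_fourier_neg, hinv, neg_neg]
    rw [this]; exact hg.comp_neg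
  have hNc : Continuous N := hh_cont.comp (continuous_const_mul _)
  have key : 𝓕 (𝓕⁻ N) (ξ / (2 * π)) = N (ξ / (2 * π)) :=
    congrFun (hNc.fourier_fourierInv_eq hN hFN) _
  rw [hinv, Real.fourier_real_eq_integral_exp_smul] at key
  have hNξ : N (ξ / (2 * π)) = h ξ := by
    simp only [N]
    rw [mul_div_cancel₀ _ h2π.ne']
  rw [FT, ← hNξ, ← key]
  congr 2 with v
  rw [smul_eq_mul]
  congr 2
  push_cast
  field_simp

noncomputable def solitonProduct (c y : ℝ) : ℂ :=
  ((2 * c / (c ^ 2 * y ^ 2 + 1) : ℝ) : ℂ) * ((c : ℂ) * y + Complex.I)⁻¹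

noncomputable def solitonProductSpectrum (c ξ : ℝ) : ℝ :=
  (2 * max ξ 0 / c + 1) * Real.exp (-|ξ| / c)

section SolitonProduct

variable {c : ℝ}

@[fun_prop]
theorem continuous_solitonProductSpectrum : Continuous (solitonProductSpectrum c) := by
  unfold solitonProductSpectrum
  fun_prop

theorem cexp_mul_solitonProductSpectrum_of_nonneg (x : ℝ) {ξ : ℝ} (hξ : 0 ≤ ξ) :
    Complex.exp (Complex.I * ξ * x) * solitonProductSpectrum c ξ =
      2 / c * (ξ * Complex.exp ((Complex.I * x - (c : ℂ)⁻¹) * ξ))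
        + Complex.exp ((Complex.I * x - (c : ℂ)⁻¹) * ξ) := by
  have hexp : Complex.exp (Complex.I * ξ * x) * (Real.exp (-|ξ| / c) : ℂ) =
      Complex.exp ((Complex.I * x - (c : ℂ)⁻¹) * ξ) := by
    rw [Complex.ofReal_exp, ← Complex.exp_add, abs_of_nonneg hξ]
    push_cast
    ring_nf
  rw [solitonProductSpectrum, max_eq_left hξ, ← hexp]
  push_cast
  ring

theorem cexp_mul_solitonProductSpectrum_of_nonpos (x : ℝ) {ξ : ℝ} (hξ : ξ ≤ 0) :
    Complex.exp (Complex.I * ξ * x) * solitonProductSpectrum c ξ =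
      Complex.exp ((Complex.I * x + (c : ℂ)⁻¹) * ξ) := by
  rw [solitonProductSpectrum, max_eq_right hξ, abs_of_nonpos hξ, mul_zero, zero_div, zero_add,
    one_mul, Complex.ofReal_exp, ← Complex.exp_add]
  push_cast
  ring_nf

variable (hc : 0 < c) (x : ℝ)
include hc

theorem re_I_mul_sub_inv_neg : (Complex.I * x - (c : ℂ)⁻¹).re < 0 := by
  simpa using hc

theorem re_I_mul_add_inv_pos : 0 < (Complex.I * x + (c : ℂ)⁻¹).re := by
  simpa using hc

theorem integrableOn_Ioi_cexp_mul_solitonProductSpectrum :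
    IntegrableOn (fun ξ : ℝ => Complex.exp (Complex.I * ξ * x) * solitonProductSpectrum c ξ)
      (Ioi 0) := by
  have ha := re_I_mul_sub_inv_neg hc x
  refine IntegrableOn.congr_fun (((integrableOn_mul_exp_mul_complex_Ioi ha).const_mul
    (2 / c : ℂ)).add (integrableOn_exp_mul_complex_Ioi ha 0)) (fun ξ hξ => ?_) measurableSet_Ioi
  exact (cexp_mul_solitonProductSpectrum_of_nonneg x hξ.le).symm

theorem integral_Ioi_cexp_mul_solitonProductSpectrum :
    ∫ ξ in Ioi (0 : ℝ), Complex.exp (Complex.I * ξ * x) * solitonProductSpectrum c ξ =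
      2 / (c * (Complex.I * x - (c : ℂ)⁻¹) ^ 2) - 1 / (Complex.I * x - (c : ℂ)⁻¹) := by
  have ha := re_I_mul_sub_inv_neg hc x
  rw [setIntegral_congr_fun measurableSet_Ioi
    (fun _ hξ => cexp_mul_solitonProductSpectrum_of_nonneg x (le_of_lt hξ)),
    integral_add ((integrableOn_mul_exp_mul_complex_Ioi ha).const_mul _)
      (integrableOn_exp_mul_complex_Ioi ha 0),
    integral_const_mul, integral_mul_exp_mul_complex_Ioi ha, integral_exp_mul_complex_Ioi ha,
    Complex.ofReal_zero, mul_zero, Complex.exp_zero]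
  generalize Complex.I * x - (c : ℂ)⁻¹ = a
  ring

theorem integrableOn_Iic_cexp_mul_solitonProductSpectrum :
    IntegrableOn (fun ξ : ℝ => Complex.exp (Complex.I * ξ * x) * solitonProductSpectrum c ξ)
      (Iic 0) :=
  (integrableOn_exp_mul_complex_Iic (re_I_mul_add_inv_pos hc x) 0).congr_fun
    (fun _ hξ => (cexp_mul_solitonProductSpectrum_of_nonpos x hξ).symm) measurableSet_Iic

theorem integral_Iic_cexp_mul_solitonProductSpectrum :
    ∫ ξ in Iic (0 : ℝ), Complex.exp (Complex.I * ξ * x) * solitonProductSpectrum c ξ =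
      1 / (Complex.I * x + (c : ℂ)⁻¹) := by
  rw [setIntegral_congr_fun measurableSet_Iic
    (fun _ hξ => cexp_mul_solitonProductSpectrum_of_nonpos x hξ),
    integral_exp_mul_complex_Iic (re_I_mul_add_inv_pos hc x)]
  simp

theorem integrable_cexp_mul_solitonProductSpectrum :
    Integrable (fun ξ : ℝ => Complex.exp (Complex.I * ξ * x) * solitonProductSpectrum c ξ) := by
  simpa using (integrableOn_Iic_cexp_mul_solitonProductSpectrum hc x).union
    (integrableOn_Ioi_cexp_mul_solitonProductSpectrum hc x)

theorem integral_cexp_mul_solitonProductSpectrum :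
    ∫ ξ : ℝ, Complex.exp (Complex.I * ξ * x) * solitonProductSpectrum c ξ =
      2 * Complex.I * solitonProduct c x := by
  rw [← intervalIntegral.integral_Iic_add_Ioi
    (integrableOn_Iic_cexp_mul_solitonProductSpectrum hc x)
    (integrableOn_Ioi_cexp_mul_solitonProductSpectrum hc x),
    integral_Iic_cexp_mul_solitonProductSpectrum hc x,
    integral_Ioi_cexp_mul_solitonProductSpectrum hc x, solitonProduct]
  have hc0 : (c : ℂ) ≠ 0 := Complex.ofReal_ne_zero.mpr hc.ne'
  have h1 : Complex.I * x * c + 1 ≠ 0 := fun h => by simpa using congrArg Complex.re h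
  have h2 : Complex.I * x * c - 1 ≠ 0 := fun h => by simpa using congrArg Complex.re h
  have hd : (c : ℂ) * x + Complex.I = -Complex.I * (Complex.I * x * c - 1) := by
    linear_combination ((x : ℂ) * c) * Complex.I_sq
  have hq : (c : ℂ) ^ 2 * x ^ 2 + 1 = -((Complex.I * x * c + 1) * (Complex.I * x * c - 1)) := by
    linear_combination ((x : ℂ) ^ 2 * c ^ 2) * Complex.I_sq
  push_cast
  rw [hd, hq]
  field_simp
  ring

theorem integrable_solitonProduct : Integrable (solitonProduct c) := by
  have hmeas : Measurable (solitonProduct c) := by unfold solitonProduct; fun_prop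
  refine ((integrable_comp_mul_left_iff (fun t : ℝ => (1 + t ^ 2)⁻¹) hc.ne').mpr
    integrable_inv_one_add_sq |>.const_mul (2 * c)).mono' hmeas.aestronglyMeasurable
    (Eventually.of_forall fun y => ?_)
  have hinv : ‖((c : ℂ) * y + Complex.I)⁻¹‖ ≤ 1 := by
    rw [norm_inv]
    refine inv_le_one_of_one_le₀ ?_
    simpa using Complex.abs_im_le_norm ((c : ℂ) * y + Complex.I)
  rw [solitonProduct, norm_mul, Complex.norm_real, Real.norm_of_nonneg (by positivity)]
  calc 2 * c / (c ^ 2 * y ^ 2 + 1) * ‖((c : ℂ) * y + Complex.I)⁻¹‖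
      ≤ 2 * c / (c ^ 2 * y ^ 2 + 1) := mul_le_of_le_one_right (by positivity) hinv
    _ = 2 * c * (1 + (c * y) ^ 2)⁻¹ := by ring

theorem FT_solitonProduct (ξ : ℝ) :
    FT (solitonProduct c) ξ =
      (√(2 * π))⁻¹ * (-(π * Complex.I) * solitonProductSpectrum c ξ) := by
  refine FT_eq_of_integral_exp_mul_eq
    (h := fun ξ => -(π * Complex.I) * solitonProductSpectrum c ξ) ?_ (by fun_prop) (integrable_solitonProduct hc) (fun x => ?_) ξ
  · simpa using (integrable_cexp_mul_solitonProductSpectrum hc 0).const_mul (-(π * Complex.I))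
  · simp_rw [mul_left_comm _ (-(π * Complex.I) : ℂ)]
    rw [integral_const_mul, integral_cexp_mul_solitonProductSpectrum hc x]
    linear_combination (-2 * π * solitonProduct c x) * Complex.I_sq

theorem Cplus_solitonProduct :
    Cplus (solitonProduct c) x = -(Complex.I / 2) *
      (2 / (c * (Complex.I * x - (c : ℂ)⁻¹) ^ 2) - 1 / (Complex.I * x - (c : ℂ)⁻¹)) := by
  simp only [Cplus, FT_solitonProduct hc, mul_left_comm (Complex.exp _), integral_const_mul]
  rw [integral_Ici_eq_integral_Ioi, integral_Ioi_cexp_mul_solitonProductSpectrum hc x,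
    ← mul_assoc, ← mul_assoc, ← Complex.ofReal_mul, ← mul_inv, Real.mul_self_sqrt (by positivity)]
  push_cast
  field_simp

end SolitonProduct

/-- For the soliton profile `Q_c(x) = 2c/(c²x²+1)`, the function
`f(x) = (cx+i)⁻¹` satisfies `-i f' - C₊(Q_c f) = -(c/2) f`, i.e. the Lax operator
`L = -i∂ - C₊ q` at `q = Q_c` has eigenvalue `-c/2` with eigenvector `(cx+i)⁻¹`. -/
theorem stmt16 (c : ℝ) (hc : 0 < c) :
    ∀ x : ℝ,
      -Complex.I * deriv (fun y : ℝ => ((c : ℂ) * y + Complex.I)⁻¹) x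
          - Cplus (fun y : ℝ =>
              ((2 * c / (c ^ 2 * y ^ 2 + 1) : ℝ) : ℂ) * ((c : ℂ) * y + Complex.I)⁻¹) x
        = -((c : ℂ) / 2) * ((c : ℂ) * x + Complex.I)⁻¹ := by
  intro x
  have hc0 : (c : ℂ) ≠ 0 := Complex.ofReal_ne_zero.mpr hc.ne'
  have ha : Complex.I * x - (c : ℂ)⁻¹ ≠ 0 := fun h => by
    simpa [h] using re_I_mul_sub_inv_neg hc x
  have hd : (c : ℂ) * x + Complex.I = -Complex.I * c * (Complex.I * x - (c : ℂ)⁻¹) := by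
    field_simp
    linear_combination ((c : ℂ) * x) * Complex.I_sq
  have hderiv : HasDerivAt (fun y : ℝ => ((c : ℂ) * y + Complex.I)⁻¹)
      (-(c * 1) / ((c : ℂ) * x + Complex.I) ^ 2) x :=
    (((hasDerivAt_id (x : ℂ)).const_mul (c : ℂ)).add_const Complex.I |>.inv
      fun h => by simpa using congrArg Complex.im h).comp_ofReal
  rw [hderiv.deriv, show (fun y : ℝ => ((2 * c / (c ^ 2 * y ^ 2 + 1) : ℝ) : ℂ) *
    ((c : ℂ) * y + Complex.I)⁻¹) = solitonProduct c from rfl, Cplus_solitonProduct hc x, hd]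
  generalize Complex.I * x - (c : ℂ)⁻¹ = a at ha ⊢
  field_simp
  linear_combination (2 - c * a) * Complex.I_sq
end
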